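/- arXiv:2006.00072 — 3 statements merged into one kernel-verified Lean document; each statement's English description precedes it below -/
import Mathlib

section
/- Let (A,d,μ) and (A',d',μ') be A∞-algebras over a commutative unital ring R, and let M := Hom_R(C(A),↑A') with differential ∂, filtration F_rM, and operations Q¹ₙ as defined. Then for every degree 0 element F¹ ∈ M₀, the series R(F) := Σ_{n≥1} Q¹ₙ(F¹^{⊗n}) converges in the complete filtered dg module M to a well-defined element of M_{−1}, so that F¹ ↦ R(F) is a well-defined set-theoretic function M₀ → M_{−1}; moreover R(F) = 0 if and only if the coalgebra morphism F : C(A) → C(A') corresponding to F¹ is a morphism of dg coalgebras, i.e., δ'∘F = F∘δ. -/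
/-!
# A common framework for `A∞`-algebras over a commutative ring

A (homologically) ℤ-graded `R`-module is encoded as a family `V : ℤ → Type` of
`R`-modules.  Throughout, all A∞-data is encoded by its *bar components*:
for an A∞-algebra `(A, d, μ)` the family `V` stands for the suspension `↑A`
(so `V k = A (k-1)`), and the structure is recorded through the components of
the bar codifferential, `op 1 = ↑∘d∘↓` and `op n = ↑∘μₙ∘↓^{⊗n}` (`n ≥ 2`),
all of which are homogeneous of degree `-1`.  Likewise a weak A∞-morphism
`(f₁, f₂, …)` is recorded through its bar components `F¹ₙ = ↑∘fₙ∘↓^{⊗n}`,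
homogeneous of degree `0`.  This passage is the bijective correspondence
`μ ↔ δ`, `f ↔ F` described in the paper.

A map out of the tensor power `(↑A)^{⊗n}` into a graded module corresponds to
a multilinear map on the direct sum `⨁ₖ V k` (evaluated on tuples of
homogeneous elements); equalities of such maps are recorded by their values on
all tuples of homogeneous elements, which generate the tensor power.
All Koszul signs are explicit.
-/

open DirectSum Finset

namespace AInf

variable (R : Type) [CommRing R]

/-- The underlying module `⨁ₖ V k` of a graded module. -/
abbrev GTot (V : ℤ → Type) [∀ k, AddCommGroup (V k)] [∀ k, Module R (V k)] : Type :=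
  ⨁ k, V k

/-- A homogeneous element: a degree together with an element of that component. -/
abbrev GElt (V : ℤ → Type) : Type := (k : ℤ) × V k

variable (V V' V'' : ℤ → Type)
variable [∀ k, AddCommGroup (V k)] [∀ k, Module R (V k)]
variable [∀ k, AddCommGroup (V' k)] [∀ k, Module R (V' k)]
variable [∀ k, AddCommGroup (V'' k)] [∀ k, Module R (V'' k)]

/-- Inclusion of a homogeneous element into the direct sum. -/
def inclS (z : GElt V) : GTot R V := DirectSum.lof R ℤ V z.1 z.2

/-- Projection onto the degree `k` component. -/
def cmp (k : ℤ) : GTot R V →ₗ[R] V k := DirectSum.component R ℤ V k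

/-- Extend a finite tuple to `ℕ`, by a default value. -/
def extd {α : Sort*} (dflt : α) {n : ℕ} (w : Fin n → α) : ℕ → α :=
  fun j => if h : j < n then w ⟨j, h⟩ else dflt

/-- Extend a tuple of homogeneous elements by `0` (placed in degree `0`). -/
def extS {n : ℕ} (w : Fin n → GElt V) : ℕ → GElt V := extd ⟨0, 0⟩ w

/-- Sum of the degrees of the first `i` slots. -/
def dsum (w : ℕ → GElt V) (i : ℕ) : ℤ := ∑ j ∈ Finset.range i, (w j).1

/-- The sign `(-1)^e` for an integer `e`, as an integer scalar. -/
def sgn (e : ℤ) : ℤ := (-1) ^ e.natAbs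

/-- A family of `n`-ary operations `(↑A)^{⊗n} → ↑A'` (one for each arity `n ≥ 0`;
the arity-0 component is required to vanish wherever it matters), encoded as
multilinear maps on the direct sums. -/
abbrev Ops : Type :=
  (n : ℕ) → MultilinearMap R (fun _ : Fin n => GTot R V) (GTot R V')

/-- Evaluate the arity-`m` member of a family on the first `m` slots of an
`ℕ`-indexed tuple of homogeneous elements. -/
def evalAt (φ : Ops R V V') (m : ℕ) (w : ℕ → GElt V) : GTot R V' :=
  φ m (fun t => inclS R V (w t.val))

/-- A multilinear map is homogeneous of degree `d` if its value on homogeneous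
elements of degrees `k₁, …, kₙ` lies in the component of degree `k₁+⋯+kₙ+d`. -/
def IsHomog {n : ℕ} (φ : MultilinearMap R (fun _ : Fin n => GTot R V) (GTot R V')) (d : ℤ) :
    Prop :=
  ∀ w : Fin n → GElt V,
    φ (fun i => inclS R V (w i)) ∈ LinearMap.range (DirectSum.lof R ℤ V' ((∑ i, (w i).1) + d))

/-- The tuple obtained from `w` by replacing the slots `[i, i+l)` by the value of
the degree `-1` operation `inner l` on them (this encodes `1^{⊗i} ⊗ D¹_l ⊗ 1^{⊗j}`
applied to a tensor of homogeneous elements, without the Koszul prefix sign). -/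
def insIn (inner : Ops R V V) (l i : ℕ) (w : ℕ → GElt V) : ℕ → GElt V := fun t =>
  if t < i then w t
  else if t = i then
    ⟨(∑ s ∈ Finset.range l, (w (i + s)).1) - 1,
      cmp R V ((∑ s ∈ Finset.range l, (w (i + s)).1) - 1)
        (inner l (fun s : Fin l => inclS R V (w (i + s.val))))⟩
  else w (t + l - 1)

/-- The value of `∑_{k=1}^n outer¹_k ∘ innerᵏ_n` on a tensor of homogeneous
elements, where `inner` is a degree `-1` coderivation-type family (with its
Koszul prefix signs) and `outer` is any family (e.g. this computes `F ∘ δ` or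
`δ ∘ δ` componentwise). -/
def codiffSum (outer : Ops R V V') (inner : Ops R V V) (n : ℕ) (w : ℕ → GElt V) :
    GTot R V' :=
  ∑ l ∈ Finset.Icc 1 n, ∑ i ∈ Finset.range (n - l + 1),
    sgn (dsum V w i) • evalAt R V V' outer (n - l + 1) (insIn R V inner l i w)

/-- The value of `∑_{k=1}^n outer¹_k ∘ Fᵏ_n` on a tensor of homogeneous elements,
where `F` is the coalgebra morphism with components `fs` (degree `0`, so no
Koszul signs occur): the sum is over all compositions of `n`.  This computes
`δ' ∘ F` componentwise. -/
def morphSum (fs : Ops R V V') (outer : Ops R V' V'') (n : ℕ) (w : ℕ → GElt V) :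
    GTot R V'' :=
  ∑ c : Composition n,
    outer c.length (fun q =>
      fs (c.blocksFun q) (fun s => inclS R V (w (c.sizeUpTo q.val + s.val))))

/-- An A∞-algebra structure, recorded through the components of its bar
codifferential `δ` on `C(A) = T^c(↑A)`:  `op 1 = ↑∘d∘↓` and `op n = ↑∘μₙ∘↓^{⊗n}`,
all homogeneous of degree `-1`, with `∑_{k=1}^n δ¹_k ∘ δᵏ_n = 0` for all `n`. -/
structure AInfty : Type where
  op : Ops R V V
  op_zero : op 0 = 0
  homog : ∀ n, IsHomog R V V (op n) (-1)
  codiff : ∀ (n : ℕ) (w : Fin n → GElt V),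
    codiffSum R V V op op n (extS V w) = 0

/-- A weak A∞-morphism, recorded through the components `F¹ₙ = ↑∘fₙ∘↓^{⊗n}` of
the corresponding morphism of dg coalgebras `(C(A),δ) → (C(A'),δ')`: they are
homogeneous of degree `0` and satisfy `∑ δ'¹_k∘Fᵏ_n = ∑ F¹_k∘δᵏ_n` for all `n`. -/
structure AIHom (a : AInfty R V) (b : AInfty R V') : Type where
  f : Ops R V V'
  f_zero : f 0 = 0
  homog : ∀ n, IsHomog R V V' (f n) 0
  comm : ∀ (n : ℕ) (w : Fin n → GElt V),
    morphSum R V V' V' f b.op n (extS V w) = codiffSum R V V' f a.op n (extS V w)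

/-- An arity-1 multilinear map, as a linear map. -/
def lin1 {M N : Type} [AddCommGroup M] [Module R M] [AddCommGroup N] [Module R N]
    (φ : MultilinearMap R (fun _ : Fin 1 => M) N) : M →ₗ[R] N :=
  (MultilinearMap.ofSubsingleton R M N (0 : Fin 1)).symm φ

/-- The cast along an equality of degrees. -/
def gcast {j k : ℤ} (h : j = k) : V j ≃ₗ[R] V k := h ▸ LinearEquiv.refl R (V j)

/-- The differential of an A∞-algebra, extracted degreewise from `op 1`
(conjugating by the suspension: this is `d = ↓ ∘ (op 1) ∘ ↑`). -/
def dOf (a : AInfty R V) (k : ℤ) : V k →ₗ[R] V (k - 1) :=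
  (cmp R V (k - 1)) ∘ₗ (lin1 R (a.op 1)) ∘ₗ (DirectSum.lof R ℤ V k)

/-- A degree `-1` differential on a graded module. -/
abbrev Diff : Type := ∀ k : ℤ, V k →ₗ[R] V (k - 1)

/-- Squaring to zero for a degreewise differential. -/
def DiffSq (d : Diff R V) : Prop := ∀ (k : ℤ) (x : V k), d (k - 1) (d k x) = 0

/-- A chain map of graded complexes (a degree `0` map commuting with the
differentials). -/
def IsChainMapD (dA : Diff R V) (dB : Diff R V') (f : ∀ k, V k →ₗ[R] V' k) : Prop :=
  ∀ (k : ℤ) (x : V k), f (k - 1) (dA k x) = dB k (f k x)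

/-- `h` is a chain homotopy between the chain maps `f` and `g`:
`f - g = d'h + hd`. -/
def IsHomotopyD (dA : Diff R V) (dB : Diff R V') (f g : ∀ k, V k →ₗ[R] V' k)
    (h : ∀ k, V k →ₗ[R] V' (k + 1)) : Prop :=
  ∀ (k : ℤ) (x : V k),
    f k x - g k x
      = gcast R V' (by omega : k + 1 - 1 = k) (dB (k + 1) (h k x))
        + gcast R V' (by omega : k - 1 + 1 = k) (h (k - 1) (dA k x))

/-- `f` is a chain homotopy equivalence: it is a chain map and there are a chain
map `g` in the opposite direction and homotopies `h : gf ≃ id`, `l : fg ≃ id`. -/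
def IsChainHtpyEquivD (dA : Diff R V) (dB : Diff R V') (f : ∀ k, V k →ₗ[R] V' k) : Prop :=
  IsChainMapD R V V' dA dB f ∧
  ∃ g : ∀ k, V' k →ₗ[R] V k, IsChainMapD R V' V dB dA g ∧
    (∃ h : ∀ k, V k →ₗ[R] V (k + 1),
      IsHomotopyD R V V dA dA (fun k => (g k).comp (f k)) (fun _ => LinearMap.id) h) ∧
    (∃ l : ∀ k, V' k →ₗ[R] V' (k + 1),
      IsHomotopyD R V' V' dB dB (fun k => (f k).comp (g k)) (fun _ => LinearMap.id) l)

/-- A cycle of the complex `(V, d)`. -/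
def IsCycleD (dA : Diff R V) {k : ℤ} (x : V k) : Prop := dA k x = 0

/-- A boundary of the complex `(V, d)`. -/
def IsBoundaryD (dA : Diff R V) {k : ℤ} (x : V k) : Prop :=
  ∃ y : V (k + 1), gcast R V (by omega : k + 1 - 1 = k) (dA (k + 1) y) = x

/-- `f` induces an isomorphism on homology in every degree (stated elementwise:
injectivity and surjectivity of the induced map on homology classes). -/
def InducesHomologyIso (dA : Diff R V) (dB : Diff R V') (f : ∀ k, V k →ₗ[R] V' k) : Prop :=
  (∀ (k : ℤ) (x : V k), IsCycleD R V dA x → IsBoundaryD R V' dB (f k x) →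
      IsBoundaryD R V dA x) ∧
  (∀ (k : ℤ) (y : V' k), IsCycleD R V' dB y →
      ∃ x : V k, IsCycleD R V dA x ∧ IsBoundaryD R V' dB (f k x - y))

/-- The (bar component of the) linear part of a weak A∞-morphism, degreewise. -/
def linPart {a : AInfty R V} {b : AInfty R V'} (F : AIHom R V V' a b) (k : ℤ) :
    V k →ₗ[R] V' k :=
  (cmp R V' k) ∘ₗ (lin1 R (F.f 1)) ∘ₗ (DirectSum.lof R ℤ V k)

/-- The weak A∞-morphism `F` extends the chain map `f₁`. -/
def Extends {a : AInfty R V} {b : AInfty R V'} (F : AIHom R V V' a b)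
    (f₁ : ∀ k, V k →ₗ[R] V' k) : Prop :=
  ∀ z : GElt V, F.f 1 (fun _ => inclS R V z) = inclS R V' ⟨z.1, f₁ z.1 z.2⟩

/-- `ν` together with a weak A∞-morphism from `a` extending the chain map `f₁`
is a transfer of `a` over `f₁`. -/
def IsTransfer (a : AInfty R V) (f₁ : ∀ k, V k →ₗ[R] V' k) (ν : AInfty R V') : Prop :=
  ∃ F : AIHom R V V' a ν, Extends R V V' F f₁

/-- An isotopy is a weak A∞-morphism whose linear part is the identity. -/
def IsIsotopy {a b : AInfty R V} (F : AIHom R V V a b) : Prop :=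
  ∀ z : GElt V, F.f 1 (fun _ => inclS R V z) = inclS R V z

/-- A weak isomorphism is a weak A∞-morphism whose linear part is an
isomorphism of the underlying chain complexes. -/
def IsWeakIso {a : AInfty R V} {b : AInfty R V'} (F : AIHom R V V' a b) : Prop :=
  ∃ e : ∀ k, V k ≃ₗ[R] V' k,
    ∀ z : GElt V, F.f 1 (fun _ => inclS R V z) = inclS R V' ⟨z.1, e z.1 z.2⟩

/-- A quasi-isomorphism of A∞-algebras: a weak A∞-morphism whose linear part
induces an isomorphism on homology. -/
def IsQIso {a : AInfty R V} {b : AInfty R V'} (F : AIHom R V V' a b) : Prop :=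
  InducesHomologyIso R V V' (dOf R V a) (dOf R V' b) (linPart R V V' F)

/-- The total linear map `⨁ V → ⨁ V'` induced by a degree `0` family. -/
def tmapD (f : ∀ k, V k →ₗ[R] V' k) : GTot R V →ₗ[R] GTot R V' :=
  DirectSum.toModule R ℤ _ (fun k => (DirectSum.lof R ℤ V' k) ∘ₗ f k)

/-- A strict isomorphism between two A∞-structures on the same complex:
an automorphism `e` of the underlying graded module intertwining all the
structure operations (the arity-1 case states that `e` is a chain map). -/
def IsStrictIso (a b : AInfty R V) (e : ∀ k, V k ≃ₗ[R] V k) : Prop :=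
  ∀ (n : ℕ) (w : Fin n → GElt V),
    tmapD R V V (fun k => (e k : V k →ₗ[R] V k)) (a.op n (fun i => inclS R V (w i)))
      = b.op n (fun i => inclS R V ⟨(w i).1, e (w i).1 (w i).2⟩)

end AInf

namespace AInf

variable (R : Type) [CommRing R]
variable (V V' : ℤ → Type)
variable [∀ k, AddCommGroup (V k)] [∀ k, Module R (V k)]
variable [∀ k, AddCommGroup (V' k)] [∀ k, Module R (V' k)]

/-!
## The hom complex `M = Hom_R(C(A), ↑A')` and the operations `Q¹ₙ`

An element of the graded module `M ≅ Π_{n≥1} Hom_R((↑A)^{⊗n}, ↑A')` is a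
family in `Ops R V V'` whose arity-`0` component vanishes; the element is
homogeneous of degree `m` if all its components are (`memMh`).  Maps out of
tensor powers of `M` and elements of `M` produced by the operations `Q¹ₙ` are
recorded through their value functions (`RawM`): the value of the arity-`k`
component on any tuple of homogeneous elements of `C(A)`; tensors of
homogeneous elements generate everything in sight, so this records the
operations faithfully.  All Koszul signs (with respect to both the internal
grading of `C(A)` and the degrees in `M`) are explicit.
-/

/-- A value function: for every arity `k`, a value on every (ℕ-extended) tuple
of homogeneous elements of `C(A)`.  Every element of `M` determines one
(`rawOf`), as do the results of the operations `Q¹ₙ`. -/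
abbrev RawM : Type := (k : ℕ) → (ℕ → GElt V) → GTot R V'

/-- The value function of an element of `M`. -/
def rawOf (F : Ops R V V') : RawM R V V' :=
  fun k w => F k (fun t : Fin k => inclS R V (w t.val))

/-- Membership of the degree-`m` homogeneous component of
`M = Hom_R(C(A),↑A')`. -/
def memMh (F : Ops R V V') (m : ℤ) : Prop :=
  F 0 = 0 ∧ ∀ n, IsHomog R V V' (F n) m

/-- The value function of `Q¹₁(G) = ∂G = δ'¹₁∘G − (−1)^e G∘δ`, for `G` of
degree `e`. -/
def QoneVal (aops : Ops R V V) (bops : Ops R V' V') (e : ℤ) (G : RawM R V V') :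
    RawM R V V' :=
  fun k w =>
    lin1 R (bops 1) (G k w)
      - sgn e • ∑ l ∈ Finset.Icc 1 k, ∑ i ∈ Finset.range (k - l + 1),
          sgn (dsum V w i) • G (k - l + 1) (insIn R V aops l i w)

/-- The value function of
`Q¹_p(F₍₁₎⊗…⊗F₍p₎) = δ'¹_p ∘ (F₍₁₎⊗…⊗F₍p₎) ∘ Δ̄^{p-1}` for `p ≥ 2`:
a sum over all compositions of the arity `k` into `p` blocks, with the Koszul
sign of moving each `F₍q₎` (of degree `degs q`) past the blocks preceding it. -/
def QhiVal (bops : Ops R V' V') (p : ℕ) (degs : Fin p → ℤ)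
    (args : Fin p → RawM R V V') : RawM R V V' :=
  fun k w =>
    ∑ c : Composition k,
      if h : c.length = p then
        sgn (∑ q : Fin p, degs q * dsum V w (c.sizeUpTo q.val)) •
          bops p (fun q =>
            args q (c.blocksFun (Fin.cast h.symm q))
              (fun j => w (c.sizeUpTo q.val + j)))
      else 0

/-- The value function of `Q¹_p`, for any `p` (with `Q¹₁ = ∂`). -/
def QVal (aops : Ops R V V) (bops : Ops R V' V') :
    (p : ℕ) → (degs : Fin p → ℤ) → (args : Fin p → RawM R V V') → RawM R V V'
  | 1, degs, args => QoneVal R V V' aops bops (degs 0) (args 0)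
  | p, degs, args => QhiVal R V V' bops p degs args

/-- The degrees of the arguments of `Qᵏ_n` applied at position `i` with inner
arity `l`: the inserted element `Q¹_l(…)` has degree `(∑ degrees) − 1`. -/
def degsIns (degs : ℕ → ℤ) (l i : ℕ) : ℕ → ℤ := fun t =>
  if t < i then degs t
  else if t = i then (∑ s ∈ Finset.range l, degs (i + s)) - 1
  else degs (t + l - 1)

/-- The arguments of `Qᵏ_n` applied at position `i` with inner arity `l`:
insertion of `Q¹_l` of the `l` consecutive arguments starting at slot `i`. -/
def argsIns (aops : Ops R V V) (bops : Ops R V' V')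
    (args : ℕ → RawM R V V') (degs : ℕ → ℤ) (l i : ℕ) : ℕ → RawM R V V' := fun t =>
  if t < i then args t
  else if t = i then
    QVal R V V' aops bops l (fun s : Fin l => degs (i + s.val))
      (fun s : Fin l => args (i + s.val))
  else args (t + l - 1)

end AInf

/-!
With all degrees zero every Koszul sign in `Q¹ₙ(F¹^{⊗n})` is `+1`.  On inputs of arity `k`,
`Q¹ₙ(F¹^{⊗n})` for `n ≥ 2` is the part of `δ'¹ ∘ F` coming from compositions of `k` into `n`
blocks, and it vanishes for `n > k` since no such composition exists; `Q¹₁(F¹) = ∂F¹` is the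
one-block part `δ'¹₁ ∘ F¹` minus `F¹ ∘ δ`.  Summing over `n` therefore gives
`R(F) = δ'¹ ∘ F − F¹ ∘ δ`, whose vanishing is the componentwise form of `δ' ∘ F = F ∘ δ`.
-/

namespace AInf

variable {R : Type} [CommRing R]
variable {V V' V'' : ℤ → Type}

section

variable [∀ k, AddCommGroup (V' k)] [∀ k, Module R (V' k)]

lemma QhiVal_eq_zero_of_lt (bops : Ops R V' V') {p : ℕ} (degs : Fin p → ℤ)
    (args : Fin p → RawM R V V') {k : ℕ} (hk : k < p) (w : ℕ → GElt V) :
    QhiVal R V V' bops p degs args k w = 0 :=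
  Finset.sum_eq_zero fun c _ => dif_neg fun h => by have := c.length_le; omega

end

variable [∀ k, AddCommGroup (V k)] [∀ k, Module R (V k)]
variable [∀ k, AddCommGroup (V' k)] [∀ k, Module R (V' k)]
variable [∀ k, AddCommGroup (V'' k)] [∀ k, Module R (V'' k)]

def compositionTerm (fs : Ops R V V') (outer : Ops R V' V'') {n : ℕ} (w : ℕ → GElt V)
    (c : Composition n) : GTot R V'' :=
  outer c.length (fun q =>
    fs (c.blocksFun q) (fun s => inclS R V (w (c.sizeUpTo q.val + s.val))))

lemma morphSum_eq_sum_compositionTerm (fs : Ops R V V') (outer : Ops R V' V'') (n : ℕ)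
    (w : ℕ → GElt V) :
    morphSum R V V' V'' fs outer n w = ∑ c : Composition n, compositionTerm fs outer w c :=
  rfl

lemma compositionTerm_single (fs : Ops R V V') (outer : Ops R V' V'') {n : ℕ} (hn : 0 < n)
    (w : ℕ → GElt V) :
    compositionTerm fs outer w (Composition.single n hn)
      = lin1 R (outer 1) (rawOf R V V' fs n w) := by
  have fs_congr : ∀ m (h : m = n),
      fs m (fun s : Fin m => inclS R V (w s.val)) = rawOf R V V' fs n w := by
    rintro m rfl
    rfl
  change outer 1 _ = outer 1 _
  congr 1
  funext q
  have hq : q.val = 0 := Nat.lt_one_iff.mp q.isLt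
  simp only [hq, Composition.sizeUpTo_zero, zero_add]
  exact fs_congr _ (Composition.single_blocksFun hn q)

lemma apply_eq_zero_of_arity_eq_zero (φ : Ops R V V') (hφ : φ 0 = 0) {m : ℕ} (h : m = 0)
    (args : Fin m → GTot R V) : φ m args = 0 := by
  subst h
  rw [hφ]
  rfl

lemma sum_ite_length_eq_one {M : Type} [AddCommMonoid M] {n : ℕ} (hn : 0 < n)
    (T : Composition n → M) :
    (∑ c : Composition n, if c.length = 1 then T c else 0) = T (Composition.single n hn) := by
  rw [Fintype.sum_eq_single (Composition.single n hn) fun c hc => if_neg fun h =>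
    hc ((Composition.eq_single_iff_length hn).mpr h)]
  exact if_pos (Composition.single_length hn)

lemma QVal_of_ne_one (aops : Ops R V V) (bops : Ops R V' V') {p : ℕ} (hp : p ≠ 1)
    (degs : Fin p → ℤ) (args : Fin p → RawM R V V') :
    QVal R V V' aops bops p degs args = QhiVal R V V' bops p degs args := by
  match p, hp with
  | 0, _ => rfl
  | p + 2, _ => rfl

lemma QoneVal_arity_zero (aops : Ops R V V) (bops : Ops R V' V') (e : ℤ) (G : RawM R V V')
    (w : ℕ → GElt V) (hG : G 0 w = 0) :
    QoneVal R V V' aops bops e G 0 w = 0 := by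
  simp [QoneVal, hG]

lemma QVal_eq_zero_of_lt (aops : Ops R V V) (bops : Ops R V' V') {p : ℕ} (degs : Fin p → ℤ)
    (args : Fin p → RawM R V V') {k : ℕ} (hk : k < p) (w : ℕ → GElt V)
    (hargs : ∀ q, args q 0 w = 0) :
    QVal R V V' aops bops p degs args k w = 0 := by
  by_cases hp : p = 1
  · subst hp
    obtain rfl : k = 0 := by omega
    exact QoneVal_arity_zero aops bops _ _ w (hargs 0)
  · rw [QVal_of_ne_one aops bops hp]
    exact QhiVal_eq_zero_of_lt bops degs args hk w

lemma QhiVal_zero_degs (bops : Ops R V' V') (F : Ops R V V') (p k : ℕ) (w : ℕ → GElt V) :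
    QhiVal R V V' bops p (fun _ => 0) (fun _ => rawOf R V V' F) k w
      = ∑ c : Composition k, if c.length = p then compositionTerm F bops w c else 0 := by
  refine Finset.sum_congr rfl fun c _ => ?_
  split_ifs with h
  · subst h
    simp only [zero_mul, Finset.sum_const_zero]
    exact one_smul _ _
  · rfl

lemma QoneVal_zero_deg (aops : Ops R V V) (bops : Ops R V' V') (F : Ops R V V') (k : ℕ)
    (w : ℕ → GElt V) :
    QoneVal R V V' aops bops 0 (rawOf R V V' F) k w
      = lin1 R (bops 1) (rawOf R V V' F k w) - codiffSum R V V' F aops k w := by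
  unfold QoneVal
  rw [show sgn 0 = 1 from rfl, one_smul]
  rfl

lemma QVal_zero_degs (aops : Ops R V V) (bops : Ops R V' V') (F : Ops R V V') (n : ℕ) {k : ℕ}
    (hk : 0 < k) (w : ℕ → GElt V) :
    QVal R V V' aops bops n (fun _ => 0) (fun _ => rawOf R V V' F) k w
      = (∑ c : Composition k, if c.length = n then compositionTerm F bops w c else 0)
        - if n = 1 then codiffSum R V V' F aops k w else 0 := by
  by_cases hn : n = 1
  · subst hn
    rw [if_pos rfl, sum_ite_length_eq_one hk, compositionTerm_single F bops hk]
    exact QoneVal_zero_deg aops bops F k w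
  · rw [if_neg hn, sub_zero, QVal_of_ne_one aops bops hn]
    exact QhiVal_zero_degs bops F n k w

/-- `R(F) = δ'¹ ∘ F − F¹ ∘ δ` in every arity. -/
lemma sum_QVal_zero_degs (aops : Ops R V V) (bops : Ops R V' V') (hb : bops 0 = 0)
    (F : Ops R V V') (k : ℕ) (w : ℕ → GElt V) :
    (∑ n ∈ Finset.Icc 1 k, QVal R V V' aops bops n (fun _ => 0) (fun _ => rawOf R V V' F) k w)
      = morphSum R V V' V' F bops k w - codiffSum R V V' F aops k w := by
  rcases Nat.eq_zero_or_pos k with rfl | hk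
  · have hterm (c : Composition 0) : compositionTerm F bops w c = 0 :=
      apply_eq_zero_of_arity_eq_zero bops hb (Nat.le_zero.mp c.length_le) _
    simp [morphSum_eq_sum_compositionTerm, hterm, codiffSum]
  rw [Finset.sum_congr rfl fun n _ => QVal_zero_degs aops bops F n hk w, Finset.sum_sub_distrib,
    Finset.sum_comm, morphSum_eq_sum_compositionTerm,
    Finset.sum_ite_eq' _ 1, if_pos (Finset.mem_Icc.mpr ⟨le_rfl, hk⟩)]
  congr 1
  refine Finset.sum_congr rfl fun c _ => ?_
  rw [Finset.sum_ite_eq, if_pos (Finset.mem_Icc.mpr ⟨c.length_pos_of_pos hk, c.length_le⟩)]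

/-- Lemma `lemma:Ainf-hom`(2).  For a degree `0` element
`F¹ ∈ M₀` of `M = Hom_R(C(A),↑A')`, the series `R(F) = ∑_{n≥1} Q¹ₙ(F¹^{⊗n})`
converges in the complete filtered dg module `M`: on the arity-`k` component
all terms with `n > k` vanish, so `R(F)` is the well-defined element of
`M_{-1}` whose arity-`k` component is the finite sum `∑_{n=1}^{k}`.  Moreover
`R(F) = 0` if and only if the coalgebra morphism `F : C(A) → C(A')`
corresponding to `F¹` is a morphism of dg coalgebras, `δ'∘F = F∘δ`. -/
theorem statement9
    (a : AInfty R V) (b : AInfty R V')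
    (F : Ops R V V') (hF : memMh R V V' F 0) :
    -- convergence: the terms of the series vanish on low-arity components
    (∀ (k : ℕ) (w : Fin k → GElt V) (n : ℕ), k < n →
      QVal R V V' a.op b.op n (fun _ => 0) (fun _ => rawOf R V V' F) k (extS V w) = 0) ∧
    -- `R(F) = 0` iff `F` is a morphism of dg coalgebras
    ((∀ (k : ℕ) (w : Fin k → GElt V),
        (∑ n ∈ Finset.Icc 1 k,
          QVal R V V' a.op b.op n (fun _ => 0) (fun _ => rawOf R V V' F) k (extS V w)) = 0) ↔
      (∀ (n : ℕ) (w : Fin n → GElt V),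
        morphSum R V V' V' F b.op n (extS V w)
          = codiffSum R V V' F a.op n (extS V w))) := by
  have hF0 : ∀ w, rawOf R V V' F 0 w = 0 := fun _ => by simp [rawOf, hF.1]
  refine ⟨fun k w n hkn => QVal_eq_zero_of_lt a.op b.op _ _ hkn _ fun _ => hF0 _, ?_⟩
  simp only [sum_QVal_zero_degs a.op b.op b.op_zero, sub_eq_zero]

end AInf
end

section
/- Let (A,d,μ) and (A',d',μ') be A∞-algebras over a commutative unital ring R with bar constructions (C(A),δ) and (C(A'),δ'). Let m > 1 and let F¹₁,…,F¹_{m−1} be degree 0 linear maps F¹_k : C^k(A) → ↑A' such that the coalgebra morphism F determined by them satisfies (δ'∘F − F∘δ) restricted to C^{≤m−1}(A) equals 0, and let c_m(F) := Σ_{k=2}^m δ'¹_k∘F^k_m − Σ_{k=1}^{m−1} F¹_k∘δ^k_m. Then there exists a degree 0 linear map F̃¹_m : C^m(A) → ↑A' such that the coalgebra morphism F̃ : C(A) → C(A') determined by (F¹₁,…,F¹_{m−1},F̃¹_m,0,…) satisfies (δ'∘F̃ − F̃∘δ) restricted to C^{≤m}(A) equals 0 if and only if c_m(F) = −∂̄F̃¹_m,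 where ∂̄G = δ'¹₁∘G − (−1)^{|G|} G∘δ^m_m is the differential on Hom_R(C^m(A),↑A'). -/
/-!
# A common framework for `A∞`-algebras over a commutative ring

A (homologically) ℤ-graded `R`-module is encoded as a family `V : ℤ → Type` of
`R`-modules.  Throughout, all A∞-data is encoded by its *bar components*:
for an A∞-algebra `(A, d, μ)` the family `V` stands for the suspension `↑A`
(so `V k = A (k-1)`), and the structure is recorded through the components of
the bar codifferential, `op 1 = ↑∘d∘↓` and `op n = ↑∘μₙ∘↓^{⊗n}` (`n ≥ 2`),
all of which are homogeneous of degree `-1`.  Likewise a weak A∞-morphism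
`(f₁, f₂, …)` is recorded through its bar components `F¹ₙ = ↑∘fₙ∘↓^{⊗n}`,
homogeneous of degree `0`.  This passage is the bijective correspondence
`μ ↔ δ`, `f ↔ F` described in the paper.

A map out of the tensor power `(↑A)^{⊗n}` into a graded module corresponds to
a multilinear map on the direct sum `⨁ₖ V k` (evaluated on tuples of
homogeneous elements); equalities of such maps are recorded by their values on
all tuples of homogeneous elements, which generate the tensor power.
All Koszul signs are explicit.
-/

open DirectSum Finset

namespace AInf

variable (R : Type) [CommRing R]
variable (V V' : ℤ → Type)
variable [∀ k, AddCommGroup (V k)] [∀ k, Module R (V k)]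
variable [∀ k, AddCommGroup (V' k)] [∀ k, Module R (V' k)]

/-- The value of the obstruction cocycle
`c_m(F) = ∑_{k=2}^m δ'¹_k∘Fᵏ_m − ∑_{k=1}^{m-1} F¹_k∘δᵏ_m`
on a tensor of homogeneous elements, where `F` is the coalgebra morphism with
components `fs` and `δ, δ'` have components `aops, bops`.  (The sum over
compositions of length `≥ 2` computes `∑_{k=2}^m δ'¹_k∘Fᵏ_m`; under
`k = m - l + 1` the second sum is over insertions of `aops l` with
`2 ≤ l ≤ m`.)  It only involves the components `fs 1, …, fs (m-1)`. -/
def obstrVal (bops : Ops R V' V') (fs : Ops R V V') (aops : Ops R V V)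
    (m : ℕ) (w : ℕ → GElt V) : GTot R V' :=
  (∑ c : Composition m,
      if 2 ≤ c.length then
        bops c.length (fun q =>
          fs (c.blocksFun q) (fun s => inclS R V (w (c.sizeUpTo q.val + s.val))))
      else 0)
  - ∑ l ∈ Finset.Icc 2 m, ∑ i ∈ Finset.range (m - l + 1),
      sgn (dsum V w i) • evalAt R V V' fs (m - l + 1) (insIn R V aops l i w)

/-- The family `fs` satisfies the weak A∞-morphism identities
(`δ'∘F = F∘δ` on `C^{≤m}(A)`) up to arity `m`. -/
def MorphUpTo (a : AInfty R V) (b : AInfty R V') (fs : Ops R V V') (m : ℕ) : Prop :=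
  ∀ n ≤ m, ∀ w : Fin n → GElt V,
    morphSum R V V' V' fs b.op n (extS V w) = codiffSum R V V' fs a.op n (extS V w)

/-- The value of `∂̄g = δ'¹₁∘g − (−1)^e g∘δᵐ_m` on a tensor of homogeneous
elements, for `g : Hom(Cᵐ(A), ↑A')` of degree `e` given through its value
function `gval`; this is the differential of the quotient complex
`(Hom(Cᵐ(A),↑A'), ∂̄) ≅ (F_mM, ∂)/(F_{m+1}M, ∂)`. -/
def dbarVal (bops : Ops R V' V') (aops : Ops R V V)
    (gval : (ℕ → GElt V) → GTot R V') (e : ℤ) (m : ℕ) (w : ℕ → GElt V) : GTot R V' :=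
  lin1 R (bops 1) (gval w)
    - sgn e • ∑ i ∈ Finset.range m, sgn (dsum V w i) • gval (insIn R V aops 1 i w)

end AInf

/-!
In arity `m` the component `F̃¹_m` of `F̃` occurs in exactly two places: as `δ'¹₁ ∘ F̃¹_m`
(the single composition of `m`) and as `F̃¹_m ∘ δᵐ_m` (insertions of `δ¹₁`). Every other term
only involves `F¹₁, …, F¹_{m-1}`, and these make up `c_m(F)`, so the arity-`m` component of
`δ'∘F̃ − F̃∘δ` is `c_m(F) + ∂̄F̃¹_m`. In arities `< m` the maps `F` and `F̃` have the same
components, so there the identities hold by assumption.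
-/

lemma Composition.blocksFun_lt_of_two_le_length {n : ℕ} (hn : 0 < n) {c : Composition n}
    (hc : 2 ≤ c.length) (q : Fin c.length) : c.blocksFun q < n :=
  (Composition.ne_single_iff hn).mp
    (fun h => by rw [h, Composition.single_length hn] at hc; omega) q

lemma Composition.sum_eq_single_add_sum_two_le_length {N : Type*} [AddCommMonoid N] {n : ℕ}
    (hn : 0 < n) (X : Composition n → N) :
    ∑ c, X c = X (Composition.single n hn) + ∑ c, (if 2 ≤ c.length then X c else 0) := by
  have hsplit : ∀ c : Composition n, X c
      = (if c = Composition.single n hn then X c else 0) + (if 2 ≤ c.length then X c else 0) := by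
    intro c
    have := c.length_pos_of_pos hn
    by_cases h : c.length = 1
    · rw [if_pos ((c.eq_single_iff_length hn).mpr h), if_neg (by omega), add_zero]
    · rw [if_neg (mt (c.eq_single_iff_length hn).mp h), if_pos (by omega), zero_add]
  rw [Finset.sum_congr rfl fun c _ => hsplit c, Finset.sum_add_distrib, Fintype.sum_ite_eq']

namespace AInf

variable {R : Type} [CommRing R]
variable (V V' V'' : ℤ → Type)
variable [∀ k, AddCommGroup (V k)] [∀ k, Module R (V k)]
variable [∀ k, AddCommGroup (V' k)] [∀ k, Module R (V' k)]
variable [∀ k, AddCommGroup (V'' k)] [∀ k, Module R (V'' k)]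

lemma morphSum_congr {fs fs' : Ops R V V'} (outer : Ops R V' V'') {n : ℕ}
    (h : ∀ k ≤ n, fs k = fs' k) (w : ℕ → GElt V) :
    morphSum R V V' V'' fs outer n w = morphSum R V V' V'' fs' outer n w :=
  Finset.sum_congr rfl fun c _ => congrArg (outer c.length) <|
    funext fun q => by rw [h _ (c.blocksFun_le q)]

lemma codiffSum_congr {fs fs' : Ops R V V'} (inner : Ops R V V) {n : ℕ}
    (h : ∀ k ≤ n, fs k = fs' k) (w : ℕ → GElt V) :
    codiffSum R V V' fs inner n w = codiffSum R V V' fs' inner n w := by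
  refine Finset.sum_congr rfl fun l hl => Finset.sum_congr rfl fun i _ => ?_
  rw [Finset.mem_Icc] at hl
  simp only [evalAt, h (n - l + 1) (by omega)]

lemma morphSum_update_self (fs : Ops R V V') (outer : Ops R V' V'') {n : ℕ} (hn : 0 < n)
    (g : MultilinearMap R (fun _ : Fin n => GTot R V) (GTot R V')) (w : ℕ → GElt V) :
    morphSum R V V' V'' (Function.update fs n g) outer n w
      = lin1 R (outer 1) (g fun t => inclS R V (w t.val))
        + ∑ c : Composition n, if 2 ≤ c.length then
            outer c.length (fun q =>
              fs (c.blocksFun q) (fun s => inclS R V (w (c.sizeUpTo q.val + s.val))))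
          else 0 := by
  rw [morphSum, Composition.sum_eq_single_add_sum_two_le_length hn]
  congr 1
  · show outer 1 _ = outer 1 _
    congr 1
    funext q
    obtain ⟨q, hq⟩ := q
    obtain rfl : q = 0 := by rw [Composition.single_length] at hq; omega
    show Function.update fs n g n (fun s => inclS R V (w (0 + s.val))) = _
    simp only [Function.update_self, Nat.zero_add]
  · refine Finset.sum_congr rfl fun c _ => ?_
    split_ifs with hc
    · exact congrArg _ <| funext fun q => by
        rw [Function.update_of_ne (Composition.blocksFun_lt_of_two_le_length hn hc q).ne]
    · rfl

lemma codiffSum_update_self (fs : Ops R V V') (inner : Ops R V V) {n : ℕ} (hn : 0 < n)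
    (g : MultilinearMap R (fun _ : Fin n => GTot R V) (GTot R V')) (w : ℕ → GElt V) :
    codiffSum R V V' (Function.update fs n g) inner n w
      = ∑ i ∈ Finset.range n,
            sgn (dsum V w i) • g (fun t => inclS R V (insIn R V inner 1 i w t.val))
        + ∑ l ∈ Finset.Icc 2 n, ∑ i ∈ Finset.range (n - l + 1),
            sgn (dsum V w i) • evalAt R V V' fs (n - l + 1) (insIn R V inner l i w) := by
  have hIcc : Finset.Icc 1 n = insert 1 (Finset.Icc 2 n) := by
    ext l; simp only [Finset.mem_Icc, Finset.mem_insert]; omega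
  rw [codiffSum, hIcc, Finset.sum_insert (by simp), Nat.sub_add_cancel hn]
  congr 1
  · simp only [evalAt, Function.update_self]
  · refine Finset.sum_congr rfl fun l hl => Finset.sum_congr rfl fun i _ => ?_
    rw [Finset.mem_Icc] at hl
    simp only [evalAt, Function.update_of_ne (show n - l + 1 ≠ n by omega)]

lemma morphSum_sub_codiffSum_update_self (fs : Ops R V V') (aops : Ops R V V)
    (bops : Ops R V' V') {n : ℕ} (hn : 0 < n)
    (g : MultilinearMap R (fun _ : Fin n => GTot R V) (GTot R V')) (w : ℕ → GElt V) :
    morphSum R V V' V' (Function.update fs n g) bops n w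
        - codiffSum R V V' (Function.update fs n g) aops n w
      = obstrVal R V V' bops fs aops n w
        + dbarVal R V V' bops aops (fun w' => g fun t => inclS R V (w' t.val)) 0 n w := by
  rw [morphSum_update_self V V' V' fs bops hn, codiffSum_update_self V V' fs aops hn, obstrVal,
    dbarVal, sgn, Int.natAbs_zero, pow_zero, one_smul]
  abel

lemma morphUpTo_update_iff {a : AInfty R V} {b : AInfty R V'} {fs : Ops R V V'} {m : ℕ}
    (hup : MorphUpTo R V V' a b fs (m - 1))
    (g : MultilinearMap R (fun _ : Fin m => GTot R V) (GTot R V')) :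
    MorphUpTo R V V' a b (Function.update fs m g) m ↔
      ∀ w : Fin m → GElt V,
        morphSum R V V' V' (Function.update fs m g) b.op m (extS V w)
          = codiffSum R V V' (Function.update fs m g) a.op m (extS V w) := by
  refine ⟨fun H => H m le_rfl, fun H n hn w => ?_⟩
  rcases hn.eq_or_lt with rfl | hlt
  · exact H w
  · have hagree : ∀ k ≤ n, fs k = Function.update fs m g k := fun k hk =>
      (Function.update_of_ne (by omega) _ _).symm
    rw [← morphSum_congr V V' V' b.op hagree, ← codiffSum_congr V V' a.op hagree]
    exact hup n (by omega) w

theorem statement13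
    (a : AInfty R V) (b : AInfty R V')
    (m : ℕ) (hm : 1 < m)
    (fs : Ops R V V')
    (hup : MorphUpTo R V V' a b fs (m - 1)) :
    ∀ g : MultilinearMap R (fun _ : Fin m => GTot R V) (GTot R V'),
      IsHomog R V V' g 0 →
      (MorphUpTo R V V' a b (Function.update fs m g) m ↔
        ∀ w : Fin m → GElt V,
          obstrVal R V V' b.op fs a.op m (extS V w)
            = - dbarVal R V V' b.op a.op
                (fun w' => g (fun t => inclS R V (w' t.val))) 0 m (extS V w)) := by
  intro g _
  rw [morphUpTo_update_iff V V' hup g]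
  refine forall_congr' fun w => ?_
  rw [eq_neg_iff_add_eq_zero,
    ← morphSum_sub_codiffSum_update_self V V' fs a.op b.op (by omega) g, sub_eq_zero]

end AInf
end

section
/- Let R be a commutative unital ring. Let A = R⟨x⟩ be the free associative R-algebra on a generator x of degree 0 with zero differential, regarded as an A∞-algebra (A,0,μ) with μ₂ the multiplication and μ_n = 0 for n ≥ 3. Let A' = R⟨x,u,ū⟩ be the free associative R-algebra on generators x (degree 0), u (degree 2), ū (degree 1) with differential determined by d'x = d'ū = 0 and d'u = ū, regarded as an A∞-algebra (A',d',μ') with μ'₂ the multiplication and μ'_n = 0 for n ≥ 3, and let f₁ : A → A' be the algebra inclusion determined by f₁(x) = x (so the strict morphism (f₁,0,0,…) is an A∞-quasi-isomorphism). Then: (a) the unique chain map g₁ : (A',d') → (A,0) admitting a degree +1 map h : A → A with g₁f₁ − id_A = 0·h + h·0 is given by g₁(x^k) = x^k for k ≥ 0 and g₁ = 0 on all other monomials, and necessarily h = 0; (b) the resulting transferred A∞-structure ν on (A',d'), given by ν₂ = f₁∘μ₂∘(g₁⊗g₁) and ν_n = 0 for n ≥ 3 (equivalently, ν₂(a,b)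 = ab if both a and b are R-linear combinations of powers of x and ν₂(a,b) = 0 otherwise), is neither equal to nor strictly isomorphic to (A',d',μ'). -/
/-!
# A common framework for `A∞`-algebras over a commutative ring

A (homologically) ℤ-graded `R`-module is encoded as a family `V : ℤ → Type` of
`R`-modules.  Throughout, all A∞-data is encoded by its *bar components*:
for an A∞-algebra `(A, d, μ)` the family `V` stands for the suspension `↑A`
(so `V k = A (k-1)`), and the structure is recorded through the components of
the bar codifferential, `op 1 = ↑∘d∘↓` and `op n = ↑∘μₙ∘↓^{⊗n}` (`n ≥ 2`),
all of which are homogeneous of degree `-1`.  Likewise a weak A∞-morphism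
`(f₁, f₂, …)` is recorded through its bar components `F¹ₙ = ↑∘fₙ∘↓^{⊗n}`,
homogeneous of degree `0`.  This passage is the bijective correspondence
`μ ↔ δ`, `f ↔ F` described in the paper.

A map out of the tensor power `(↑A)^{⊗n}` into a graded module corresponds to
a multilinear map on the direct sum `⨁ₖ V k` (evaluated on tuples of
homogeneous elements); equalities of such maps are recorded by their values on
all tuples of homogeneous elements, which generate the tensor power.
All Koszul signs are explicit.
-/

open DirectSum Finset

namespace AInf

/-!
## The free dg algebras `R⟨x⟩` and `R⟨x, u, ū⟩`

The free associative algebra `A' = R⟨x,u,ū⟩` on generators `x` (degree `0`),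
`u` (degree `2`), `ū` (degree `1`) has basis the words in the three letters;
we encode the letters as `0, 1, 2 : Fin 3` (`x, u, ū` respectively).  On the
bar side (cf. the convention of this file) the graded module `FA` has
`FA k = ` the span of the words of weight `k - 1`.  Similarly `A = R⟨x⟩` is
concentrated in degree `0` with basis `xⁿ`, `n : ℕ`, so `FX k` is spanned by
`ℕ` when `k = 1` and vanishes otherwise. -/

variable (R : Type) [CommRing R]

/-- Degrees of the generators `x, u, ū`. -/
def gdeg : Fin 3 → ℕ := ![0, 2, 1]

/-- The weight (= degree in `A'`) of a word. -/
def wt (w : List (Fin 3)) : ℤ := (w.map fun a => ((gdeg a : ℕ) : ℤ)).sum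

/-- The suspension of the free algebra `R⟨x,u,ū⟩`: `FA k` is spanned by the
words of weight `k - 1`. -/
abbrev FA : ℤ → Type := fun k => {w : List (Fin 3) // wt w = k - 1} →₀ R

/-- The suspension of the free algebra `R⟨x⟩ ⊆ R⟨x,u,ū⟩` on the degree `0`
generator `x`: concentrated in (bar) degree `1`, with basis `xⁿ`, `n : ℕ`. -/
abbrev FX : ℤ → Type := fun k => {_n : ℕ // k = 1} →₀ R

/-- The homogeneous basis element of `⨁ FA` given by a word. -/
noncomputable def wordEl (w : List (Fin 3)) : GTot R (FA R) :=
  inclS R (FA R) ⟨wt w + 1, Finsupp.single ⟨w, by omega⟩ 1⟩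

/-- The homogeneous basis element `xⁿ` of `⨁ FX`. -/
noncomputable def xel (n : ℕ) : GTot R (FX R) :=
  inclS R (FX R) ⟨1, Finsupp.single ⟨n, rfl⟩ 1⟩

lemma wt_replicate (n : ℕ) : wt (List.replicate n (0 : Fin 3)) = 0 := by
  simp [wt, gdeg]

/-- The inclusion `f₁ : R⟨x⟩ → R⟨x,u,ū⟩`, `x ↦ x` (on the bar side). -/
noncomputable def incF (k : ℤ) : FX R k →ₗ[R] FA R k :=
  Finsupp.lmapDomain R R (fun p =>
    ⟨List.replicate p.1 0, by rw [wt_replicate]; omega⟩)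

end AInf

/-! Part (a) is forced because `A = R⟨x⟩` is concentrated in degree `0`.  For (b): no power
of `x` has degree `1` in `A'`, so `ν₂` vanishes on `A'₁ ⊗ A'₁`, whereas `ū · ū ≠ 0`.  A strict
isomorphism preserves degrees and intertwines the products, so it would force `μ'₂` to vanish
on `A'₁ ⊗ A'₁` as well. -/

lemma MultilinearMap.eq_zero_of_forall_single {R ι κ N : Type} [CommRing R] [Finite ι]
    [AddCommGroup N] [Module R N] {φ : MultilinearMap R (fun _ : ι => κ →₀ R) N}
    (h : ∀ f : ι → κ, φ (fun i => Finsupp.single (f i) 1) = 0) : φ = 0 :=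
  Module.Basis.ext_multilinear (fun _ => Finsupp.basisSingleOne) fun f => by
    simpa [Finsupp.coe_basisSingleOne] using h f

namespace AInf

section

variable {R : Type} [CommRing R]

lemma IsStrictIso.op_eq_zero {V : ℤ → Type} [∀ k, AddCommGroup (V k)] [∀ k, Module R (V k)]
    {a b : AInfty R V} {e : ∀ k, V k ≃ₗ[R] V k} (he : IsStrictIso R V a b e) {n : ℕ} {k : ℤ}
    (ha : ∀ v : Fin n → V k, a.op n (fun i => DirectSum.lof R ℤ V k (v i)) = 0)
    (v : Fin n → V k) : b.op n (fun i => DirectSum.lof R ℤ V k (v i)) = 0 := by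
  have hv := he n fun i => ⟨k, (e k).symm (v i)⟩
  simp only [LinearEquiv.apply_symm_apply] at hv
  exact hv ▸ (ha _).symm ▸ map_zero _

lemma subsingleton_FX {k : ℤ} (hk : k ≠ 1) : Subsingleton (FX R k) :=
  have : IsEmpty {_n : ℕ // k = 1} := ⟨fun p => hk p.2⟩
  inferInstance

lemma linearMap_FX_succ_eq_zero {k : ℤ} (h : FX R k →ₗ[R] FX R (k + 1)) : h = 0 := by
  by_cases hk : k = 0
  · have := subsingleton_FX (R := R) (show k ≠ 1 by omega)
    exact Subsingleton.elim _ _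
  · have := subsingleton_FX (R := R) (show k + 1 ≠ 1 by omega)
    exact Subsingleton.elim _ _

lemma incF_single {k : ℤ} (p : {_n : ℕ // k = 1}) (r : R) :
    incF R k (Finsupp.single p r)
      = Finsupp.single ⟨List.replicate p.1 0, by rw [wt_replicate]; omega⟩ r := by
  simp only [incF, Finsupp.lmapDomain_apply, Finsupp.mapDomain_single]

lemma wt_eq_zero_of_forall_eq_zero {w : List (Fin 3)} (h : ∀ c ∈ w, c = 0) : wt w = 0 := by
  rw [List.eq_replicate_iff.mpr ⟨rfl, h⟩, wt_replicate]

lemma inclS_single_eq_wordEl (w : List (Fin 3)) {j : ℤ} (hw : wt w = j - 1) :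
    inclS R (FA R) ⟨j, Finsupp.single ⟨w, hw⟩ 1⟩ = wordEl R w := by
  obtain rfl : j = wt w + 1 := by omega
  rfl

lemma wordEl_ne_zero [Nontrivial R] (w : List (Fin 3)) : wordEl R w ≠ 0 := by
  intro h0
  have h1 := congrArg (cmp R (FA R) (wt w + 1)) h0
  rw [wordEl, inclS, cmp, DirectSum.component.lof_self, map_zero] at h1
  exact one_ne_zero (Finsupp.single_eq_zero.mp h1)

lemma op_two_ubar_ne_zero [Nontrivial R] {b : AInfty R (FA R)}
    (hb2 : ∀ w₁ w₂ : List (Fin 3),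
      b.op 2 ![wordEl R w₁, wordEl R w₂] = sgn (wt w₁ + 1) • wordEl R (w₁ ++ w₂)) :
    b.op 2 ![wordEl R [2], wordEl R [2]] ≠ 0 := by
  rw [hb2, show sgn (wt [2] + 1) = 1 from rfl, one_smul]
  exact wordEl_ne_zero _

lemma transferred_op_two_eq_zero {ν : AInfty R (FA R)}
    (hv2 : ∀ w₁ w₂ : List (Fin 3),
      ν.op 2 ![wordEl R w₁, wordEl R w₂]
        = if (∀ c ∈ w₁, c = 0) ∧ (∀ c ∈ w₂, c = 0) then
            sgn (wt w₁ + 1) • wordEl R (w₁ ++ w₂)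
          else 0)
    (v : Fin 2 → FA R 2) : ν.op 2 (fun i => DirectSum.lof R ℤ (FA R) 2 (v i)) = 0 := by
  suffices h : (ν.op 2).compLinearMap (fun _ => DirectSum.lof R ℤ (FA R) 2) = 0 from
    congrArg (fun φ : MultilinearMap R _ _ => φ v) h
  refine MultilinearMap.eq_zero_of_forall_single fun f => ?_
  have hf : (fun i => inclS R (FA R) ⟨2, Finsupp.single (f i) 1⟩)
      = ![wordEl R (f 0).1, wordEl R (f 1).1] := by
    funext i
    fin_cases i <;> exact inclS_single_eq_wordEl _ _
  change ν.op 2 (fun i => inclS R (FA R) ⟨2, Finsupp.single (f i) 1⟩) = 0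
  rw [hf, hv2, if_neg]
  rintro ⟨hx, -⟩
  have := (f 0).2
  rw [wt_eq_zero_of_forall_eq_zero hx] at this
  omega

end

variable {R : Type} [CommRing R] [Nontrivial R]

/-- Sec. `sec:str-vs-quasi` of the paper.  Let `A = R⟨x⟩`
with zero differential and `A' = R⟨x,u,ū⟩` with `d'x = d'ū = 0`, `d'u = ū`,
both regarded as A∞-algebras (dg algebras: `μ₂` the multiplication, `μₙ = 0`
for `n ≥ 3`; the hypotheses prescribe the corresponding bar components,
Koszul signs included, on basis elements — which determines them), and let
`f₁ : A → A'` be the inclusion `x ↦ x`.  Then: (a) any chain map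
`g₁ : (A',d') → (A,0)` with `g₁f₁ = id` (i.e. admitting a homotopy `h` with
`g₁f₁ − id = 0·h + h·0`) is given by `g₁(xᵏ) = xᵏ` and vanishes on all other
monomials (those of nonzero degree), and necessarily any degree `+1` map
`h : A → A` is `0`; (b) the resulting transferred A∞-structure `ν`, with
`ν₂(a,b) = ab` when both arguments are polynomials in `x` and `ν₂(a,b) = 0`
otherwise, and `νₙ = 0` for `n ≥ 3`, is neither equal to nor strictly
isomorphic to `(A',d',μ')`. -/
theorem statement18
    (a : AInfty R (FX R)) (b ν : AInfty R (FA R))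
    -- `A' = R⟨x,u,ū⟩`: differential the derivation with `d'u = ū`,
    -- multiplication the concatenation of words
    (hb2 : ∀ w₁ w₂ : List (Fin 3),
      b.op 2 ![wordEl R w₁, wordEl R w₂] = sgn (wt w₁ + 1) • wordEl R (w₁ ++ w₂))
    -- the transferred structure `ν`
    (hv2 : ∀ w₁ w₂ : List (Fin 3),
      ν.op 2 ![wordEl R w₁, wordEl R w₂]
        = if (∀ c ∈ w₁, c = 0) ∧ (∀ c ∈ w₂, c = 0) then
            sgn (wt w₁ + 1) • wordEl R (w₁ ++ w₂)
          else 0) :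
    -- (a) uniqueness of the left homotopy inverse `g₁`, and `h = 0`
    ((∀ g : ∀ k, FA R k →ₗ[R] FX R k,
        IsChainMapD R (FA R) (FX R) (dOf R (FA R) b) (dOf R (FX R) a) g →
        (∀ (k : ℤ) (x : FX R k), g k (incF R k x) = x) →
        (∀ n : ℕ,
          g 1 (Finsupp.single ⟨List.replicate n 0, by rw [wt_replicate]; omega⟩ 1)
            = Finsupp.single ⟨n, rfl⟩ 1) ∧
        (∀ k : ℤ, k ≠ 1 → g k = 0)) ∧
      (∀ h : ∀ k, FX R k →ₗ[R] FX R (k + 1), ∀ k, h k = 0)) ∧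
    -- (b) `ν` is neither equal nor strictly isomorphic to `μ'`
    (¬ (ν.op = b.op) ∧
      ¬ ∃ e : ∀ k, FA R k ≃ₗ[R] FA R k, IsStrictIso R (FA R) ν b e) := by
  have hubar : ![wordEl R [2], wordEl R [2]]
      = fun _ => DirectSum.lof R ℤ (FA R) 2 (Finsupp.single ⟨[2], rfl⟩ 1) := by
    funext i
    fin_cases i <;> exact (inclS_single_eq_wordEl [2] rfl).symm
  have hν : ν.op 2 ![wordEl R [2], wordEl R [2]] = 0 :=
    hubar ▸ transferred_op_two_eq_zero hv2 _
  refine ⟨⟨fun g _ hinc => ⟨fun n => ?_, fun k hk => ?_⟩,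
    fun h k => linearMap_FX_succ_eq_zero (h k)⟩, fun heq => ?_, fun ⟨e, he⟩ => ?_⟩
  · simpa only [incF_single] using hinc 1 (Finsupp.single ⟨n, rfl⟩ 1)
  · have := subsingleton_FX (R := R) hk
    exact Subsingleton.elim _ _
  · exact op_two_ubar_ne_zero hb2 (heq ▸ hν)
  · exact op_two_ubar_ne_zero hb2 (hubar ▸ he.op_eq_zero (transferred_op_two_eq_zero hv2) _)

end AInf
end
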